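/- For any finite simple graph H with ℓ vertices and any graphons f, g with d_□(f,g) ≤ ε, the homomorphism densities satisfy |t(H,f) - t(H,g)| ≤ |E(H)|·ε, where |E(H)| is the number of edges of H. -/

import Mathlib

open MeasureTheory

/-- Homomorphism density `t(H,h)` for a graph on `Fin ℓ` with edge finset `E`. -/
noncomputable def homDensity (ℓ : ℕ) (E : Finset (Fin ℓ × Fin ℓ)) (h : ℝ → ℝ → ℝ) : ℝ :=
  ∫ x : Fin ℓ → ℝ, ∏ e ∈ E, h (x e.1) (x e.2)
    ∂(Measure.pi fun _ => volume.restrict (Set.Icc 0 1))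

/-- The cut norm distance `d_□(f,g) = sup_{S,T ⊆ [0,1]} |∫_{S×T} (f-g)|`. -/
noncomputable def cutDist (f g : ℝ → ℝ → ℝ) : ℝ :=
  ⨆ S : {S : Set ℝ // MeasurableSet S}, ⨆ T : {T : Set ℝ // MeasurableSet T},
    |∫ x in S.1 ∩ Set.Icc 0 1, ∫ y in T.1 ∩ Set.Icc 0 1, (f x y - g x y)|

/-!
Telescoping: switch the edges of `H` from `f` to `g` one at a time. When the edge `(a, b)` is
switched, freeze every coordinate except `x a` and `x b`. As `H` is simple, each remaining edge
factor depends on at most one of `x a`, `x b`, so the change is a bilinear form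
`∫∫ (f - g)(s, t) u(s) v(t)` with `0 ≤ u, v ≤ 1`. Such a form is bounded by the cut norm: for fixed
`v`, `∫ u Φ` lies between the integrals of `Φ` over `{Φ < 0}` and over `{Φ ≥ 0}`.
-/

open Set

theorem norm_le_one_of_mem_Icc {x : ℝ} (hx : x ∈ Icc (0 : ℝ) 1) : ‖x‖ ≤ 1 :=
  abs_le.2 ⟨by linarith [hx.1], hx.2⟩

theorem abs_sub_le_one_of_mem_Icc {x y : ℝ} (hx : x ∈ Icc (0 : ℝ) 1) (hy : y ∈ Icc (0 : ℝ) 1) :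
    |x - y| ≤ 1 :=
  abs_sub_le_iff.2 ⟨by linarith [hx.2, hy.1], by linarith [hx.1, hy.2]⟩

section CutNorm

variable {α β : Type*} [MeasurableSpace α] [MeasurableSpace β]

theorem abs_integral_mul_le_of_abs_setIntegral_le {μ : Measure α} {Φ u : α → ℝ} {ε : ℝ}
    (hΦ : Integrable Φ μ) (hu : AEStronglyMeasurable u μ) (hu01 : ∀ s, u s ∈ Icc (0 : ℝ) 1)
    (hε : ∀ S, MeasurableSet S → |∫ s in S, Φ s ∂μ| ≤ ε) :
    |∫ s, u s * Φ s ∂μ| ≤ ε := by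
  set Ψ := hΦ.aestronglyMeasurable.mk Φ
  have hΨ : StronglyMeasurable Ψ := hΦ.aestronglyMeasurable.stronglyMeasurable_mk
  have hΦΨ : Φ =ᵐ[μ] Ψ := hΦ.aestronglyMeasurable.ae_eq_mk
  have hΨi : Integrable Ψ μ := hΦ.congr hΦΨ
  have huΨ : Integrable (fun s => u s * Ψ s) μ :=
    hΨi.bdd_mul hu (c := 1) (.of_forall fun s => norm_le_one_of_mem_Icc (hu01 s))
  have hsetΨ : ∀ S, MeasurableSet S → |∫ s in S, Ψ s ∂μ| ≤ ε := fun S hS => by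
    rw [← setIntegral_congr_ae₀ hS.nullMeasurableSet (hΦΨ.mono fun s h _ => h)]
    exact hε S hS
  have hpos : MeasurableSet {s | 0 ≤ Ψ s} := measurableSet_le measurable_const hΨ.measurable
  have hneg : MeasurableSet {s | Ψ s < 0} := measurableSet_lt hΨ.measurable measurable_const
  have hupper : ∫ s, u s * Ψ s ∂μ ≤ ∫ s in {s | 0 ≤ Ψ s}, Ψ s ∂μ := by
    rw [← integral_indicator hpos]
    refine integral_mono huΨ (hΨi.indicator hpos) fun s => ?_
    obtain ⟨h0, h1⟩ := hu01 s
    simp only [indicator_apply, mem_ofPred_eq]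
    split_ifs <;> nlinarith
  have hlower : ∫ s in {s | Ψ s < 0}, Ψ s ∂μ ≤ ∫ s, u s * Ψ s ∂μ := by
    rw [← integral_indicator hneg]
    refine integral_mono (hΨi.indicator hneg) huΨ fun s => ?_
    obtain ⟨h0, h1⟩ := hu01 s
    simp only [indicator_apply, mem_ofPred_eq]
    split_ifs <;> nlinarith
  rw [integral_congr_ae (hΦΨ.mono fun s h => by rw [h])]
  have h1 := abs_le.1 (hsetΨ _ hpos)
  have h2 := abs_le.1 (hsetΨ _ hneg)
  exact abs_le.2 ⟨by linarith, by linarith⟩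

def CutNormLE (μ : Measure α) (ν : Measure β) (W : α → β → ℝ) (ε : ℝ) : Prop :=
  ∀ S T, MeasurableSet S → MeasurableSet T → |∫ s in S, ∫ t in T, W s t ∂ν ∂μ| ≤ ε

theorem integrable_uncurry_mul_left {μ : Measure α} {ν : Measure β} {W : α → β → ℝ}
    (hW : Integrable (Function.uncurry W) (μ.prod ν))
    {u : α → ℝ} (hu : AEStronglyMeasurable u μ) (hu01 : ∀ s, u s ∈ Icc (0 : ℝ) 1) :
    Integrable (Function.uncurry fun s t => u s * W s t) (μ.prod ν) :=
  hW.bdd_mul (c := 1) hu.comp_fst (.of_forall fun p => norm_le_one_of_mem_Icc (hu01 p.1))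

variable {μ : Measure α} {ν : Measure β} [SFinite μ] [SFinite ν] {W : α → β → ℝ} {ε : ℝ}

theorem MeasureTheory.Integrable.restrict_prod_restrict
    (hW : Integrable (Function.uncurry W) (μ.prod ν)) (S : Set α) (T : Set β) :
    Integrable (Function.uncurry W) ((μ.restrict S).prod (ν.restrict T)) := by
  rw [Measure.prod_restrict]; exact hW.restrict

theorem CutNormLE.swap (hW : Integrable (Function.uncurry W) (μ.prod ν))
    (hcut : CutNormLE μ ν W ε) : CutNormLE ν μ (fun t s => W s t) ε := fun T S hT hS => by
  have := hcut S T hS hT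
  rwa [integral_integral_swap (hW.restrict_prod_restrict S T)] at this

theorem CutNormLE.mul_left (hW : Integrable (Function.uncurry W) (μ.prod ν)) {u : α → ℝ}
    (hu : AEStronglyMeasurable u μ) (hu01 : ∀ s, u s ∈ Icc (0 : ℝ) 1)
    (hcut : CutNormLE μ ν W ε) : CutNormLE μ ν (fun s t => u s * W s t) ε := fun S T hS hT => by
  simp_rw [integral_const_mul]
  refine abs_integral_mul_le_of_abs_setIntegral_le
    (hW.restrict_prod_restrict S T).integral_prod_left hu.restrict hu01 fun S' hS' => ?_
  rw [Measure.restrict_restrict hS']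
  exact hcut _ T (hS'.inter hS) hT

theorem CutNormLE.abs_integral_mul_mul_le (hW : Integrable (Function.uncurry W) (μ.prod ν))
    (hcut : CutNormLE μ ν W ε) {u : α → ℝ} {v : β → ℝ}
    (hu : AEStronglyMeasurable u μ) (hu01 : ∀ s, u s ∈ Icc (0 : ℝ) 1)
    (hv : AEStronglyMeasurable v ν) (hv01 : ∀ t, v t ∈ Icc (0 : ℝ) 1) :
    |∫ s, ∫ t, W s t * (u s * v t) ∂ν ∂μ| ≤ ε := by
  have hWt : Integrable (Function.uncurry fun t s => W s t) (ν.prod μ) := hW.swap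
  have hvW := (hcut.swap hW).mul_left hWt hv hv01
  have hvWi : Integrable (Function.uncurry fun s t => v t * W s t) (μ.prod ν) :=
    (integrable_uncurry_mul_left hWt hv hv01).swap
  have huvW := (hvW.swap (integrable_uncurry_mul_left hWt hv hv01)).mul_left hvWi hu hu01
  simpa [mul_comm, mul_left_comm] using huvW univ univ .univ .univ

end CutNorm

section Resampling

variable {ι : Type*} [Fintype ι] [DecidableEq ι] {α : ι → Type*} [∀ i, MeasurableSpace (α i)]
  (μ : ∀ i, Measure (α i)) [∀ i, IsProbabilityMeasure (μ i)]

theorem measurePreserving_update (i : ι) :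
    MeasurePreserving (fun p : (∀ j, α j) × α i => Function.update p.1 i p.2)
      ((Measure.pi μ).prod (μ i)) (Measure.pi μ) := by
  refine ⟨measurable_update', (Measure.pi_eq fun S hS => ?_).symm⟩
  have hpre : (fun p : (∀ j, α j) × α i => Function.update p.1 i p.2) ⁻¹' univ.pi S
      = univ.pi (Function.update S i univ) ×ˢ S i := by
    ext ⟨z, s⟩
    simp only [mem_preimage, mem_univ_pi, mem_prod]
    rw [Function.forall_update_iff (p := fun j x => x ∈ S j),
      Function.forall_update_iff (p := fun j T => z j ∈ T)]
    simp [and_comm]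
  rw [Measure.map_apply measurable_update' (.univ_pi hS), hpre, Measure.prod_prod,
    Measure.pi_pi, Finset.prod_eq_mul_prod_sdiff_singleton_of_mem (Finset.mem_univ i),
    Finset.prod_eq_mul_prod_sdiff_singleton_of_mem (Finset.mem_univ i) (fun j => μ j (S j)),
    Function.update_self, measure_univ, one_mul, mul_comm]
  congr 1
  refine Finset.prod_congr rfl fun j hj => ?_
  rw [Function.update_of_ne (by simpa using hj)]

theorem integral_eq_integral_update_update {E : Type*} [NormedAddCommGroup E] [NormedSpace ℝ E]
    (a b : ι) {F : (∀ j, α j) → E} (hF : Integrable F (Measure.pi μ)) :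
    ∫ x, F x ∂Measure.pi μ =
      ∫ z, ∫ s, ∫ t, F (Function.update (Function.update z a s) b t) ∂μ b ∂μ a ∂Measure.pi μ := by
  have hmp : MeasurePreserving
      (fun q : ((∀ j, α j) × α a) × α b => Function.update (Function.update q.1.1 a q.1.2) b q.2)
      (((Measure.pi μ).prod (μ a)).prod (μ b)) (Measure.pi μ) :=
    (measurePreserving_update μ b).comp
      ((measurePreserving_update μ a).prod (MeasurePreserving.id (μ b)))
  have hFT : Integrable (fun q => F (Function.update (Function.update q.1.1 a q.1.2) b q.2))
      (((Measure.pi μ).prod (μ a)).prod (μ b)) := hmp.integrable_comp_of_integrable hF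
  calc ∫ x, F x ∂Measure.pi μ = ∫ q, F (Function.update (Function.update q.1.1 a q.1.2) b q.2)
        ∂((Measure.pi μ).prod (μ a)).prod (μ b) := by
        conv_lhs => rw [← hmp.map_eq]
        exact integral_map hmp.measurable.aemeasurable (by rw [hmp.map_eq]; exact hF.1)
    _ = _ := by rw [integral_prod _ hFT, integral_prod _ hFT.integral_prod_left]

end Resampling

section EdgeProduct

variable {V α : Type*}

def edgeProd (F : Finset (V × V)) (c : V × V → α → α → ℝ) (x : V → α) : ℝ :=
  ∏ e ∈ F, c e (x e.1) (x e.2)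

variable {F : Finset (V × V)} {c : V × V → α → α → ℝ}

theorem edgeProd_mem_Icc (hc01 : ∀ e s t, c e s t ∈ Icc (0 : ℝ) 1) (x : V → α) :
    edgeProd F c x ∈ Icc (0 : ℝ) 1 :=
  ⟨Finset.prod_nonneg fun e _ => (hc01 e _ _).1,
    Finset.prod_le_one (fun e _ => (hc01 e _ _).1) fun e _ => (hc01 e _ _).2⟩

theorem measurable_edgeProd [MeasurableSpace α] (hc : ∀ e, Measurable (Function.uncurry (c e))) :
    Measurable (edgeProd F c) :=
  Finset.measurable_prod _ fun e _ =>
    (hc e).comp (by fun_prop : Measurable fun x : V → α => (x e.1, x e.2))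

theorem integrable_edgeProd [Fintype V] [MeasurableSpace α] (μ : Measure α)
    [IsFiniteMeasure μ] (F : Finset (V × V)) (hc : ∀ e, Measurable (Function.uncurry (c e)))
    (hc01 : ∀ e s t, c e s t ∈ Icc (0 : ℝ) 1) :
    Integrable (edgeProd F c) (Measure.pi fun _ : V => μ) :=
  .of_bound (measurable_edgeProd hc).aestronglyMeasurable 1
    (.of_forall fun x => norm_le_one_of_mem_Icc (edgeProd_mem_Icc hc01 x))

variable [DecidableEq V]

theorem edgeProd_update_of_mem {e : V × V} (he : e ∈ F) (k : α → α → ℝ) (x : V → α) :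
    edgeProd F (Function.update c e k) x = k (x e.1) (x e.2) * edgeProd (F.erase e) c x := by
  rw [edgeProd, ← Finset.mul_prod_erase F _ he, Function.update_self]
  congr 1
  exact Finset.prod_congr rfl fun e' he' => by
    rw [Function.update_of_ne (Finset.ne_of_mem_erase he')]

theorem edgeProd_update_update {a b : V}
    (hF : ∀ e ∈ F, (e.1 ≠ a ∧ e.2 ≠ a) ∨ (e.1 ≠ b ∧ e.2 ≠ b)) (z : V → α) (s t : α) :
    edgeProd F c (Function.update (Function.update z a s) b t) =
      edgeProd (F.filter fun e => e.1 ≠ b ∧ e.2 ≠ b) c (Function.update z a s) *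
        edgeProd (F.filter fun e => ¬(e.1 ≠ b ∧ e.2 ≠ b)) c (Function.update z b t) := by
  rw [edgeProd, ← Finset.prod_filter_mul_prod_filter_not F (fun e => e.1 ≠ b ∧ e.2 ≠ b)]
  congr 1
  · refine Finset.prod_congr rfl fun e he => ?_
    obtain ⟨h1, h2⟩ := (Finset.mem_filter.1 he).2
    rw [Function.update_of_ne h1, Function.update_of_ne h2]
  · refine Finset.prod_congr rfl fun e he => ?_
    obtain ⟨heF, hb⟩ := Finset.mem_filter.1 he
    obtain ⟨h1, h2⟩ := (hF e heF).resolve_right hb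
    simp [Function.update_apply, h1, h2]

end EdgeProduct

section Counting

variable {V α : Type*} [Fintype V] [DecidableEq V] [MeasurableSpace α]
  {μ : Measure α} [IsProbabilityMeasure μ] {c : V × V → α → α → ℝ} {ε : ℝ}

theorem abs_integral_mul_edgeProd_le {a b : V} (hab : a ≠ b) {F : Finset (V × V)}
    (hF : ∀ e ∈ F, (e.1 ≠ a ∧ e.2 ≠ a) ∨ (e.1 ≠ b ∧ e.2 ≠ b))
    {W : α → α → ℝ} {C : ℝ} (hW : Measurable (Function.uncurry W)) (hWC : ∀ s t, |W s t| ≤ C)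
    (hcut : CutNormLE μ μ W ε) (hc : ∀ e, Measurable (Function.uncurry (c e)))
    (hc01 : ∀ e s t, c e s t ∈ Icc (0 : ℝ) 1) :
    |∫ x, W (x a) (x b) * edgeProd F c x ∂Measure.pi fun _ => μ| ≤ ε := by
  have hWi : Integrable (Function.uncurry W) (μ.prod μ) :=
    .of_bound hW.aestronglyMeasurable C (.of_forall fun p => hWC p.1 p.2)
  have hint : Integrable (fun x : V → α => W (x a) (x b) * edgeProd F c x)
      (Measure.pi fun _ => μ) :=
    (integrable_edgeProd μ F hc hc01).bdd_mul
      (hW.comp (by fun_prop : Measurable fun x : V → α => (x a, x b))).aestronglyMeasurable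
      (.of_forall fun x => hWC (x a) (x b))
  rw [integral_eq_integral_update_update _ a b hint, ← Real.norm_eq_abs]
  refine (norm_integral_le_of_norm_le_const (C := ε) (.of_forall fun z => ?_)).trans (by simp)
  simp only [Function.update_self, Function.update_of_ne hab, edgeProd_update_update hF,
    Real.norm_eq_abs]
  exact hcut.abs_integral_mul_mul_le hWi
    ((measurable_edgeProd hc).comp (measurable_update z)).aestronglyMeasurable
    (fun s => edgeProd_mem_Icc hc01 _)
    ((measurable_edgeProd hc).comp (measurable_update z)).aestronglyMeasurable
    (fun t => edgeProd_mem_Icc hc01 _)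

theorem abs_integral_edgeProd_update_sub_le {E : Finset (V × V)} {e : V × V} (he : e ∈ E)
    (hloop : e.1 ≠ e.2) (hsimple : (e.2, e.1) ∉ E)
    (hc : ∀ e, Measurable (Function.uncurry (c e))) (hc01 : ∀ e s t, c e s t ∈ Icc (0 : ℝ) 1)
    {f g : α → α → ℝ} (hf : Measurable (Function.uncurry f)) (hg : Measurable (Function.uncurry g))
    (hf01 : ∀ s t, f s t ∈ Icc (0 : ℝ) 1) (hg01 : ∀ s t, g s t ∈ Icc (0 : ℝ) 1)
    (hcut : CutNormLE μ μ (fun s t => f s t - g s t) ε) :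
    |∫ x, edgeProd E (Function.update c e f) x ∂Measure.pi (fun _ => μ) -
      ∫ x, edgeProd E (Function.update c e g) x ∂Measure.pi (fun _ => μ)| ≤ ε := by
  have hint : ∀ k : α → α → ℝ, Measurable (Function.uncurry k) → (∀ s t, k s t ∈ Icc (0 : ℝ) 1) →
      Integrable (edgeProd E (Function.update c e k)) (Measure.pi fun _ => μ) := fun k hk hk01 =>
    integrable_edgeProd μ E
      ((Function.forall_update_iff _
        (p := fun _ (k : α → α → ℝ) => Measurable (Function.uncurry k))).2 ⟨hk, fun e' _ => hc e'⟩)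
      ((Function.forall_update_iff _
        (p := fun _ (k : α → α → ℝ) => ∀ s t, k s t ∈ Icc (0 : ℝ) 1)).2 ⟨hk01, fun e' _ => hc01 e'⟩)
  -- Since `H` is simple, no other edge joins the two endpoints of `e`.
  have hother : ∀ e' ∈ E.erase e, (e'.1 ≠ e.1 ∧ e'.2 ≠ e.1) ∨ (e'.1 ≠ e.2 ∧ e'.2 ≠ e.2) := by
    intro e' he'
    obtain ⟨hne, hmem⟩ := Finset.mem_erase.1 he'
    grind [Prod.ext_iff]
  rw [← integral_sub (hint f hf hf01) (hint g hg hg01)]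
  simp_rw [edgeProd_update_of_mem he, ← sub_mul]
  exact abs_integral_mul_edgeProd_le hloop hother (hf.sub hg)
    (fun s t => abs_sub_le_one_of_mem_Icc (hf01 s t) (hg01 s t)) hcut hc hc01

end Counting

theorem abs_sub_le_card_mul_of_insert {ι : Type*} [DecidableEq ι] (D : Finset ι → ℝ)
    (E : Finset ι) {ε : ℝ} (hstep : ∀ e ∈ E, ∀ A ⊆ E, e ∉ A → |D A - D (insert e A)| ≤ ε) :
    |D ∅ - D E| ≤ E.card * ε := by
  refine Finset.induction_on' (motive := fun A => |D ∅ - D A| ≤ A.card * ε) E (by simp)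
    fun e A he hA heA ih => ?_
  calc |D ∅ - D (insert e A)| ≤ |D ∅ - D A| + |D A - D (insert e A)| := abs_sub_le _ _ _
    _ ≤ A.card * ε + ε := add_le_add ih (hstep e he A hA heA)
    _ = (insert e A).card * ε := by rw [Finset.card_insert_of_notMem heA]; push_cast; ring

instance isProbabilityMeasure_restrict_Icc_zero_one :
    IsProbabilityMeasure (volume.restrict (Icc (0 : ℝ) 1)) :=
  ⟨by simp [Real.volume_Icc]⟩

theorem abs_setIntegral_setIntegral_le_one {α β : Type*} [MeasurableSpace α] [MeasurableSpace β]
    {μ : Measure α} {ν : Measure β} [IsProbabilityMeasure μ] [IsProbabilityMeasure ν]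
    {W : α → β → ℝ} (hW : ∀ s t, |W s t| ≤ 1) (S : Set α) (T : Set β) :
    |∫ s in S, ∫ t in T, W s t ∂ν ∂μ| ≤ 1 := by
  have hinner : ∀ s, ‖∫ t in T, W s t ∂ν‖ ≤ 1 := fun s =>
    (norm_integral_le_of_norm_le_const (.of_forall fun t => hW s t)).trans (by simp)
  exact (norm_integral_le_of_norm_le_const (.of_forall hinner)).trans (by simp)

theorem cutNormLE_cutDist {f g : ℝ → ℝ → ℝ} (hfg : ∀ s t, |f s t - g s t| ≤ 1) :
    CutNormLE (volume.restrict (Icc 0 1)) (volume.restrict (Icc 0 1))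
      (fun s t => f s t - g s t) (cutDist f g) := fun S T hS hT => by
  have hbound : ∀ S T : Set ℝ,
      |∫ x in S ∩ Icc 0 1, ∫ y in T ∩ Icc 0 1, (f x y - g x y)| ≤ 1 := fun S T => by
    simpa only [Measure.restrict_restrict' measurableSet_Icc] using
      abs_setIntegral_setIntegral_le_one (μ := volume.restrict (Icc (0 : ℝ) 1))
        (ν := volume.restrict (Icc (0 : ℝ) 1)) hfg S T
  rw [Measure.restrict_restrict' measurableSet_Icc, Measure.restrict_restrict' measurableSet_Icc,
    cutDist]
  beta_reduce
  set F : {S : Set ℝ // MeasurableSet S} → {T : Set ℝ // MeasurableSet T} → ℝ := fun S' T' =>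
    |∫ x in S'.1 ∩ Icc 0 1, ∫ y in T'.1 ∩ Icc 0 1, (f x y - g x y)|
  calc F ⟨S, hS⟩ ⟨T, hT⟩ ≤ ⨆ T', F ⟨S, hS⟩ T' :=
        le_ciSup (f := F ⟨S, hS⟩) ⟨1, forall_mem_range.2 fun T' => hbound _ _⟩ _
    _ ≤ ⨆ S', ⨆ T', F S' T' :=
        le_ciSup (f := fun S' => ⨆ T', F S' T')
          ⟨1, forall_mem_range.2 fun S' => Real.iSup_le (fun T' => hbound _ _) zero_le_one⟩ _

theorem counting_lemma_general (ℓ : ℕ) (E : Finset (Fin ℓ × Fin ℓ))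
    (hloop : ∀ e ∈ E, e.1 ≠ e.2) (hsimple : ∀ e ∈ E, (e.2, e.1) ∉ E)
    (f g : ℝ → ℝ → ℝ)
    (hfm : Measurable (Function.uncurry f)) (hgm : Measurable (Function.uncurry g))
    (hfr : ∀ x y, f x y ∈ Set.Icc (0 : ℝ) 1) (hgr : ∀ x y, g x y ∈ Set.Icc (0 : ℝ) 1)
    (ε : ℝ) (hd : cutDist f g ≤ ε) :
    |homDensity ℓ E f - homDensity ℓ E g| ≤ E.card * ε := by
  classical
  have hcut : CutNormLE (volume.restrict (Icc 0 1)) (volume.restrict (Icc 0 1))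
      (fun s t => f s t - g s t) ε := fun S T hS hT =>
    (cutNormLE_cutDist (fun s t => abs_sub_le_one_of_mem_Icc (hfr s t) (hgr s t))
      S T hS hT).trans hd
  let hybrid : Finset (Fin ℓ × Fin ℓ) → Fin ℓ × Fin ℓ → ℝ → ℝ → ℝ := fun A =>
    A.piecewise (fun _ => g) (fun _ => f)
  have htel := abs_sub_le_card_mul_of_insert
    (fun A => ∫ x, edgeProd E (hybrid A) x ∂Measure.pi fun _ => volume.restrict (Icc (0 : ℝ) 1))
    E fun e he A _ heA => by
      have h := abs_integral_edgeProd_update_sub_le (c := hybrid A) he (hloop e he) (hsimple e he)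
        (fun e' => by by_cases h : e' ∈ A <;> simp [hybrid, h, hfm, hgm])
        (fun e' => by by_cases h : e' ∈ A <;> simp [hybrid, h, hfr, hgr])
        hfm hgm hfr hgr hcut
      rwa [Function.update_eq_self_iff.2 (A.piecewise_eq_of_notMem _ _ heA).symm,
        ← Finset.piecewise_insert] at h
  convert htel using 3
  · simp [hybrid, edgeProd, homDensity]
  · refine integral_congr_ae (.of_forall fun x => Finset.prod_congr rfl fun e he => ?_)
    simp [hybrid, Finset.piecewise_eq_of_mem _ _ _ he]

/-- counting lemma: for a simple graph `H` on `ℓ` vertices with edge set `E`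
and graphons `f`, `g` with `d_□(f,g) ≤ ε`, we have `|t(H,f) - t(H,g)| ≤ |E(H)| ε`. -/
theorem counting_lemma (ℓ : ℕ) (E : Finset (Fin ℓ × Fin ℓ))
    (hloop : ∀ e ∈ E, e.1 ≠ e.2) (hsimple : ∀ e ∈ E, (e.2, e.1) ∉ E)
    (f g : ℝ → ℝ → ℝ)
    (hfm : Measurable (Function.uncurry f)) (hgm : Measurable (Function.uncurry g))
    (hfr : ∀ x y, f x y ∈ Set.Icc (0 : ℝ) 1) (hgr : ∀ x y, g x y ∈ Set.Icc (0 : ℝ) 1)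
    (hfs : ∀ x y, f x y = f y x) (hgs : ∀ x y, g x y = g y x)
    (ε : ℝ) (hd : cutDist f g ≤ ε) :
    |homDensity ℓ E f - homDensity ℓ E g| ≤ E.card * ε :=
  counting_lemma_general ℓ E hloop hsimple f g hfm hgm hfr hgr ε hd
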